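/- arXiv:1907.00113 — 4 statements merged into one kernel-verified Lean document; each statement's English description precedes it below -/
import Mathlib

section
/- Let u, v be two probability vectors in R^p (entries nonnegative, summing to 1). Suppose there exist constants α, β > 0 such that for every j, u_j ∈ {0} ∪ [α/p, β/p] and v_j ∈ [α/p, β/p]. Then the Kullback–Leibler divergence D_KL(u,v) = Σ_{j: u_j ≠ 0} u_j log(u_j/v_j) satisfies D_KL(u,v) ≥ (p α / (2 β²)) · ‖u − v‖₂². -/
/-!
For `0 ≤ u ≤ M` and `0 < v ≤ M` one has `u log (u / v) - (u - v) ≥ (u - v)² / (2M)`: the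
difference of the two sides, as a function of `u`, vanishes at `v` and has derivative
`log (u / v) - (u - v) / M`, which has the sign of `u - v` on `(0, M]` by
`1 - v / u ≤ log (u / v) ≤ u / v - 1`.
Take `M = β / p` and sum over the coordinates: the linear terms cancel as both vectors sum to `1`,
and `α ≤ β` (compare the bounds on any `v j`) gives `p α / (2 β²) ≤ p / (2 β) = 1 / (2M)`.
-/

open Real Set Finset

section
variable {x v : ℝ}

lemma log_sub_log_le_sub_div (hx : 0 < x) (hv : 0 < v) : log x - log v ≤ (x - v) / v := by
  have := log_le_sub_one_of_pos (div_pos hx hv)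
  rwa [log_div hx.ne' hv.ne', div_sub_one hv.ne'] at this

lemma sub_div_le_log_sub_log (hx : 0 < x) (hv : 0 < v) : (x - v) / x ≤ log x - log v := by
  have := one_sub_inv_le_log_of_pos (div_pos hx hv)
  rwa [log_div hx.ne' hv.ne', inv_div, one_sub_div hx.ne'] at this

end

theorem sq_sub_div_le_mul_log_div_sub_sub {M u v : ℝ} (hu : 0 ≤ u) (huM : u ≤ M) (hv : 0 < v)
    (hvM : v ≤ M) : (u - v) ^ 2 / (2 * M) ≤ u * log (u / v) - (u - v) := by
  have hM : 0 < M := hv.trans_le hvM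
  set g : ℝ → ℝ := fun x ↦ x * log x - x * log v - (x - v) - (x - v) ^ 2 / (2 * M)
  have hg : ∀ x, 0 < x → HasDerivAt g (log x - log v - (x - v) / M) x := fun x hx ↦ by
    have := (((hasDerivAt_mul_log hx.ne').sub ((hasDerivAt_id' x).mul_const (log v))).sub
      ((hasDerivAt_id' x).sub_const v)).sub
        ((((hasDerivAt_id' x).sub_const v).pow 2).div_const (2 * M))
    refine this.congr_deriv ?_
    field_simp
    ring
  have hcont : Continuous g := by fun_prop
  suffices g v ≤ g u by
    have hlog : u * log (u / v) = u * log u - u * log v := by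
      rcases hu.eq_or_lt with rfl | hu
      · simp
      · rw [log_div hu.ne' hv.ne', mul_sub]
    have hgv : g v = 0 := by simp [g]
    rw [hgv] at this
    dsimp only [g] at this
    linarith
  rcases le_total u v with huv | hvu
  · refine antitoneOn_of_hasDerivWithinAt_nonpos (f' := fun x ↦ log x - log v - (x - v) / M)
      (convex_Icc u v) hcont.continuousOn (fun x hx ↦ ?_) (fun x hx ↦ ?_) (left_mem_Icc.2 huv)
      (right_mem_Icc.2 huv) huv <;> rw [interior_Icc] at hx
    · exact (hg x (hu.trans_lt hx.1)).hasDerivWithinAt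
    · have hlog := log_sub_log_le_sub_div (hu.trans_lt hx.1) hv
      have hdiv : (x - v) / v ≤ (x - v) / M := by
        rw [div_le_div_iff₀ hv hM]
        nlinarith [hx.2]
      linarith
  · refine monotoneOn_of_hasDerivWithinAt_nonneg (f' := fun x ↦ log x - log v - (x - v) / M)
      (convex_Icc v u) hcont.continuousOn (fun x hx ↦ ?_) (fun x hx ↦ ?_) (left_mem_Icc.2 hvu)
      (right_mem_Icc.2 hvu) hvu <;> rw [interior_Icc] at hx
    · exact (hg x (hv.trans hx.1)).hasDerivWithinAt
    · have hlog := sub_div_le_log_sub_log (hv.trans hx.1) hv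
      have hdiv : (x - v) / M ≤ (x - v) / x :=
        div_le_div_of_nonneg_left (by linarith [hx.1]) (hv.trans hx.1) (by linarith [hx.2])
      linarith

theorem sum_sq_sub_div_le_sum_mul_log_div {ι : Type*} [Fintype ι] {M : ℝ} {u v : ι → ℝ}
    (hsum : ∑ i, u i = ∑ i, v i) (hu : ∀ i, 0 ≤ u i ∧ u i ≤ M)
    (hv : ∀ i, 0 < v i ∧ v i ≤ M) :
    (∑ i, (u i - v i) ^ 2) / (2 * M) ≤ ∑ i, u i * log (u i / v i) :=
  calc (∑ i, (u i - v i) ^ 2) / (2 * M)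
      = ∑ i, (u i - v i) ^ 2 / (2 * M) := sum_div ..
    _ ≤ ∑ i, (u i * log (u i / v i) - (u i - v i)) := sum_le_sum fun i _ ↦
        sq_sub_div_le_mul_log_div_sub_sub (hu i).1 (hu i).2 (hv i).1 (hv i).2
    _ = ∑ i, u i * log (u i / v i) := by
        rw [sum_sub_distrib, sum_sub_distrib, hsum, sub_self, sub_zero]

theorem kl_ge_l2_general (p : ℕ) (hp : 0 < p) (u v : Fin p → ℝ) (α β : ℝ)
    (hα : 0 < α)
    (hu0 : ∀ j, 0 ≤ u j) (hu1 : ∑ j, u j = 1)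
    (hv1 : ∑ j, v j = 1)
    (hu : ∀ j, u j = 0 ∨ (α / p ≤ u j ∧ u j ≤ β / p))
    (hv : ∀ j, α / p ≤ v j ∧ v j ≤ β / p) :
    (p * α / (2 * β ^ 2)) * ∑ j, (u j - v j) ^ 2 ≤
      ∑ j, (if u j ≠ 0 then u j * Real.log (u j / v j) else 0) := by
  have hp' : (0 : ℝ) < p := by exact_mod_cast hp
  have hv_pos (j : Fin p) : 0 < v j := (div_pos hα hp').trans_le (hv j).1
  have hαβ : α ≤ β :=
    (div_le_div_iff_of_pos_right hp').1 ((hv ⟨0, hp⟩).1.trans (hv ⟨0, hp⟩).2)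
  have hβ : 0 < β := hα.trans_le hαβ
  have hconst : p * α / (2 * β ^ 2) ≤ 1 / (2 * (β / p)) := by
    rw [div_le_div_iff₀ (by positivity) (by positivity)]
    field_simp
    nlinarith
  have hu_le (j : Fin p) : u j ≤ β / p :=
    (hu j).elim (fun h ↦ h ▸ (hv_pos j).le.trans (hv j).2) And.right
  have hkl := sum_sq_sub_div_le_sum_mul_log_div (hu1.trans hv1.symm)
    (fun j ↦ ⟨hu0 j, hu_le j⟩) (fun j ↦ ⟨hv_pos j, (hv j).2⟩)
  calc (p * α / (2 * β ^ 2)) * ∑ j, (u j - v j) ^ 2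
      ≤ 1 / (2 * (β / p)) * ∑ j, (u j - v j) ^ 2 :=
        mul_le_mul_of_nonneg_right hconst (sum_nonneg fun j _ ↦ sq_nonneg _)
    _ ≤ ∑ j, u j * log (u j / v j) := by rwa [one_div_mul_eq_div]
    _ = ∑ j, (if u j ≠ 0 then u j * Real.log (u j / v j) else 0) :=
        sum_congr rfl fun j _ ↦ (ite_eq_left_iff.2 fun h ↦ by simp [not_not.1 h]).symm

/-- KL divergence lower bound by squared ℓ₂ distance for two
probability vectors with entries in {0} ∪ [α/p, β/p] (resp. [α/p, β/p]). -/
theorem kl_ge_l2 (p : ℕ) (hp : 0 < p) (u v : Fin p → ℝ) (α β : ℝ)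
    (hα : 0 < α) (hβ : 0 < β)
    (hu0 : ∀ j, 0 ≤ u j) (hu1 : ∑ j, u j = 1)
    (hv0 : ∀ j, 0 ≤ v j) (hv1 : ∑ j, v j = 1)
    (hu : ∀ j, u j = 0 ∨ (α / p ≤ u j ∧ u j ≤ β / p))
    (hv : ∀ j, α / p ≤ v j ∧ v j ≤ β / p) :
    (p * α / (2 * β ^ 2)) * ∑ j, (u j - v j) ^ 2 ≤
      ∑ j, (if u j ≠ 0 then u j * Real.log (u j / v j) else 0) :=
  kl_ge_l2_general p hp u v α β hα hu0 hu1 hv1 hu hv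
end

section
/- Let P, Q ∈ R^{p×p} be row-stochastic matrices and π ∈ R^p a probability vector with π_min := min_j π_j > 0. Suppose there exist α, β > 0 such that all entries P_{ij} ∈ {0} ∪ [α/p, β/p] and Q_{ij} ∈ [α/p, β/p]. Then ‖P − Q‖_F² ≤ (2β²/(α π_min p)) · D_KL(P,Q), where D_KL(P,Q) := Σ_{i,j} π_i P_{ij} log(P_{ij}/Q_{ij}) 1_{P_{ij} ≠ 0}. -/
/-!
Entrywise, `φ t = t log (t / y) - t + y - (t - y)² / (2c)` vanishes at `t = y`, and for
`0 < t, y ≤ c` its derivative `log t - log y - (t - y) / c` has the sign of `t - y`, because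
`log` has slope at least `1 / c` on `(0, c]`. Hence `(x - y)² / (2c) ≤ x log (x / y) - x + y`.
Summed along a row the linear terms cancel since both rows sum to `1`, and weighting row `i` by
`π i ≥ π_min` gives the bound; as `α ≤ β`, all entries are at most `c = β² / (α p)`, which
produces the stated constant.
-/

open scoped Classical

open Real Finset

lemma sub_div_le_log_sub_log_s1 {a b c : ℝ} (ha : 0 < a) (hab : a ≤ b) (hbc : b ≤ c) :
    (b - a) / c ≤ log b - log a := by
  have hb : 0 < b := ha.trans_le hab
  calc (b - a) / c ≤ (b - a) / b := div_le_div_of_nonneg_left (sub_nonneg.2 hab) hb hbc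
    _ = 1 - a / b := by field_simp
    _ ≤ log b - log a := by
      have := log_le_sub_one_of_pos (div_pos ha hb)
      rw [log_div ha.ne' hb.ne'] at this
      linarith

lemma sq_sub_div_le_mul_log_div_sub_add {c x y : ℝ} (hx : 0 ≤ x) (hxc : x ≤ c) (hy : 0 < y)
    (hyc : y ≤ c) : (x - y) ^ 2 / (2 * c) ≤ x * log (x / y) - x + y := by
  have hc : 0 < c := hy.trans_le hyc
  rcases hx.eq_or_lt with rfl | hx
  · rw [div_le_iff₀ (by positivity)]
    nlinarith
  set φ : ℝ → ℝ := fun t => t * log t - t * log y - t + y - (t - y) ^ 2 / (2 * c)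
  have hφ' : ∀ t, 0 < t → HasDerivAt φ (log t - log y - (t - y) / c) t := by
    intro t ht
    have hsq : HasDerivAt (fun t => (t - y) ^ 2 / (2 * c)) ((t - y) / c) t := by
      refine ((((hasDerivAt_id t).sub_const y).fun_pow 2).div_const (2 * c)).congr_deriv ?_
      simp only [id]
      field_simp
      ring
    exact ((((hasDerivAt_mul_log ht.ne').sub ((hasDerivAt_id t).mul_const (log y))).sub
      (hasDerivAt_id t)).add_const y |>.sub hsq).congr_deriv (by ring)
  have hφ_cont : ∀ {a b}, 0 < a → ContinuousOn φ (Set.Icc a b) := fun ha t ht =>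
    (hφ' t (ha.trans_le ht.1)).continuousAt.continuousWithinAt
  have hφ_le : φ y ≤ φ x := by
    rcases le_total y x with hyx | hxy
    · refine monotoneOn_of_hasDerivWithinAt_nonneg (convex_Icc y x) (hφ_cont hy)
        (fun t ht => (hφ' t ?_).hasDerivWithinAt) (fun t ht => ?_) ⟨le_rfl, hyx⟩ ⟨hyx, le_rfl⟩ hyx
      all_goals rw [interior_Icc] at ht
      · exact hy.trans ht.1
      · linarith [sub_div_le_log_sub_log_s1 hy ht.1.le (ht.2.le.trans hxc)]
    · refine antitoneOn_of_hasDerivWithinAt_nonpos (convex_Icc x y) (hφ_cont hx)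
        (fun t ht => (hφ' t ?_).hasDerivWithinAt) (fun t ht => ?_) ⟨le_rfl, hxy⟩ ⟨hxy, le_rfl⟩ hxy
      all_goals rw [interior_Icc] at ht
      · exact hx.trans ht.1
      · have := sub_div_le_log_sub_log_s1 (hx.trans ht.1) ht.2.le hyc
        rw [← neg_sub y t, neg_div]
        linarith
  norm_num [φ] at hφ_le
  rw [log_div hx.ne' hy.ne']
  linarith

lemma sum_sq_sub_le_two_mul_sum_mul_log_div {ι : Type*} (s : Finset ι) {c : ℝ} {x y : ι → ℝ}
    (hc : 0 < c) (hsum : ∑ i ∈ s, x i = ∑ i ∈ s, y i) (hx : ∀ i ∈ s, 0 ≤ x i ∧ x i ≤ c)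
    (hy : ∀ i ∈ s, 0 < y i ∧ y i ≤ c) :
    ∑ i ∈ s, (x i - y i) ^ 2 ≤ 2 * c * ∑ i ∈ s, x i * log (x i / y i) := by
  rw [← div_le_iff₀' (by positivity), sum_div]
  calc ∑ i ∈ s, (x i - y i) ^ 2 / (2 * c)
      ≤ ∑ i ∈ s, (x i * log (x i / y i) - x i + y i) := sum_le_sum fun i hi =>
        sq_sub_div_le_mul_log_div_sub_add (hx i hi).1 (hx i hi).2 (hy i hi).1 (hy i hi).2
    _ = ∑ i ∈ s, x i * log (x i / y i) := by
      rw [sum_add_distrib, sum_sub_distrib, hsum, sub_add_cancel]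

-- With `0 * log _ = 0`, no indicator of `P i j ≠ 0` is needed.
noncomputable def weightedKL {ι κ : Type*} [Fintype ι] [Fintype κ] (w : ι → ℝ)
    (P Q : ι → κ → ℝ) : ℝ :=
  ∑ i, w i * ∑ j, P i j * log (P i j / Q i j)

lemma sum_sq_sub_le_div_mul_weightedKL {ι κ : Type*} [Fintype ι] [Fintype κ]
    {c m : ℝ} {w : ι → ℝ} {P Q : ι → κ → ℝ} (hc : 0 < c) (hm : 0 < m) (hw : ∀ i, m ≤ w i)
    (hrow : ∀ i, ∑ j, P i j = ∑ j, Q i j) (hP : ∀ i j, 0 ≤ P i j ∧ P i j ≤ c)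
    (hQ : ∀ i j, 0 < Q i j ∧ Q i j ≤ c) :
    ∑ i, ∑ j, (P i j - Q i j) ^ 2 ≤ 2 * c / m * weightedKL w P Q := by
  set R : ι → ℝ := fun i => ∑ j, P i j * log (P i j / Q i j)
  have hrow_le : ∀ i, ∑ j, (P i j - Q i j) ^ 2 ≤ 2 * c * R i := fun i =>
    sum_sq_sub_le_two_mul_sum_mul_log_div _ hc (hrow i) (fun j _ => hP i j) (fun j _ => hQ i j)
  have hR : ∀ i, 0 ≤ R i := fun i =>
    nonneg_of_mul_nonneg_right ((sum_nonneg fun j _ => sq_nonneg _).trans (hrow_le i))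
      (by positivity)
  calc ∑ i, ∑ j, (P i j - Q i j) ^ 2
      ≤ 2 * c / m * (m * ∑ i, R i) := by
        rw [← mul_assoc, div_mul_cancel₀ _ hm.ne', mul_sum]
        exact sum_le_sum fun i _ => hrow_le i
    _ ≤ 2 * c / m * weightedKL w P Q := by
        gcongr 2 * c / m * ?_
        rw [mul_sum]
        exact sum_le_sum fun i _ => mul_le_mul_of_nonneg_right (hw i) (hR i)

theorem frob_le_kl_general (p : ℕ) (hp : 0 < p) (P Q : Matrix (Fin p) (Fin p) ℝ)
    (pi : Fin p → ℝ) (pimin α β : ℝ)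
    (hpimin : IsLeast (Set.range pi) pimin) (hpiminpos : 0 < pimin)
    (hα : 0 < α)
    (hProw : ∀ i, ∑ j, P i j = 1) (hQrow : ∀ i, ∑ j, Q i j = 1)
    (hP : ∀ i j, P i j = 0 ∨ (α / p ≤ P i j ∧ P i j ≤ β / p))
    (hQ : ∀ i j, α / p ≤ Q i j ∧ Q i j ≤ β / p) :
    ∑ i, ∑ j, (P i j - Q i j) ^ 2 ≤
      (2 * β ^ 2 / (α * pimin * p)) *
        ∑ i, ∑ j, (if P i j ≠ 0 then pi i * P i j * Real.log (P i j / Q i j) else 0) := by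
  have hp' : (0 : ℝ) < p := Nat.cast_pos.2 hp
  have hQpos : ∀ i j, 0 < Q i j := fun i j => (div_pos hα hp').trans_le (hQ i j).1
  have hαβ : α ≤ β := by
    have := (hQ ⟨0, hp⟩ ⟨0, hp⟩).1.trans (hQ ⟨0, hp⟩ ⟨0, hp⟩).2
    rwa [div_le_div_iff_of_pos_right hp'] at this
  have hbound : β / p ≤ β ^ 2 / (α * p) := by
    rw [div_le_div_iff₀ hp' (by positivity)]
    nlinarith [mul_le_mul_of_nonneg_left hαβ (mul_nonneg (hα.trans_le hαβ).le hp'.le)]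
  have hPbound : ∀ i j, 0 ≤ P i j ∧ P i j ≤ β ^ 2 / (α * p) := fun i j => by
    rcases hP i j with h | h
    · exact ⟨h.ge, h ▸ ((hQpos i j).le.trans (hQ i j).2).trans hbound⟩
    · exact ⟨(div_pos hα hp').le.trans h.1, h.2.trans hbound⟩
  have hKL : ∀ i j, (if P i j ≠ 0 then pi i * P i j * log (P i j / Q i j) else 0) =
      pi i * (P i j * log (P i j / Q i j)) := fun i j => by
    split_ifs with h <;> simp_all [mul_assoc]
  simp_rw [hKL, ← mul_sum]
  change _ ≤ _ * weightedKL pi P Q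
  rw [show 2 * β ^ 2 / (α * pimin * p) = 2 * (β ^ 2 / (α * p)) / pimin by ring]
  exact sum_sq_sub_le_div_mul_weightedKL ((hQpos ⟨0, hp⟩ ⟨0, hp⟩).trans_le
    ((hQ _ _).2.trans hbound)) hpiminpos (fun i => hpimin.2 ⟨i, rfl⟩)
    (fun i => (hProw i).trans (hQrow i).symm) hPbound (fun i j => ⟨hQpos i j, (hQ i j).2.trans hbound⟩)

/-- Frobenius error bounded by KL divergence between Markov kernels. -/
theorem frob_le_kl (p : ℕ) (hp : 0 < p) (P Q : Matrix (Fin p) (Fin p) ℝ)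
    (pi : Fin p → ℝ) (pimin α β : ℝ)
    (hpi0 : ∀ j, 0 ≤ pi j) (hpi1 : ∑ j, pi j = 1)
    (hpimin : IsLeast (Set.range pi) pimin) (hpiminpos : 0 < pimin)
    (hα : 0 < α) (hβ : 0 < β)
    (hProw : ∀ i, ∑ j, P i j = 1) (hQrow : ∀ i, ∑ j, Q i j = 1)
    (hP : ∀ i j, P i j = 0 ∨ (α / p ≤ P i j ∧ P i j ≤ β / p))
    (hQ : ∀ i j, α / p ≤ Q i j ∧ Q i j ≤ β / p) :
    ∑ i, ∑ j, (P i j - Q i j) ^ 2 ≤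
      (2 * β ^ 2 / (α * pimin * p)) *
        ∑ i, ∑ j, (if P i j ≠ 0 then pi i * P i j * Real.log (P i j / Q i j) else 0) :=
  frob_le_kl_general p hp P Q pi pimin α β hpimin hpiminpos hα hProw hQrow hP hQ
end

section
/- Let g : X → R be continuously differentiable with majorization g(x) ≤ ĝ(x; x′) := g(x′) + ⟨∇g(x′), x − x′⟩ + (1/2)‖x − x′‖²_G for a self-adjoint positive semidefinite operator G, let p, q be proper closed convex functions, and θ = g + p − q. Let T be a self-adjoint linear operator, and let the iterates satisfy x^{k+1} ∈ argmin_x { ĝ(x; x^k) + p(x) − q(x^k) − ⟨x − x^k, ξ^k⟩ + (1/2)‖x − x^k‖²_T } with ξ^k ∈ ∂q(x^k). Then θ(x^{k+1}) ≤ θ(x^k) − (1/2)‖x^{k+1} − x^k‖²_{G + 2T}. -/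
open scoped RealInnerProductSpace
open Filter Topology

/-! The subproblem minimises `p` plus a quadratic model around `x^k`; comparing its value at
`x^{k+1}` with the values on the segment towards `x^k` and letting the step shrink yields the
first-order optimality inequality `p(x^k) ≥ p(x^{k+1}) + ⟨∇g(x^k) − ξ^k, d⟩ + ⟨d, (G + T) d⟩`,
`d = x^{k+1} − x^k`. Adding the majorization of `g` at `x^{k+1}` and the subgradient
inequality of `q` at `x^{k+1}` gives the decrease of `θ`. -/

lemma add_le_zero_of_forall_mem_Ioc {u s : ℝ}
    (h : ∀ t ∈ Set.Ioc (0 : ℝ) 1, u + (1 - t / 2) * s ≤ 0) : u + s ≤ 0 := by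
  have hlim : Tendsto (fun t : ℝ => u + (1 - t / 2) * s) (𝓝[>] 0) (𝓝 (u + s)) := by
    have : Continuous fun t : ℝ => u + (1 - t / 2) * s := by fun_prop
    simpa using this.continuousWithinAt.tendsto (x := 0) (s := Set.Ioi 0)
  exact le_of_tendsto hlim (eventually_of_mem (Ioc_mem_nhdsGT one_pos) h)

section

variable {E : Type*} [NormedAddCommGroup E] [InnerProductSpace ℝ E]

lemma inner_smul_map_smul (A : E →ₗ[ℝ] E) (r : ℝ) (d : E) :
    ⟪r • d, A (r • d)⟫ = r ^ 2 * ⟪d, A d⟫ := by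
  rw [map_smul, real_inner_smul_left, real_inner_smul_right]
  ring

theorem ConvexOn.le_of_forall_quadratic_add_le {p : E → ℝ} (hp : ConvexOn ℝ Set.univ p)
    (A : E →ₗ[ℝ] E) (c x₀ x₁ : E)
    (hmin : ∀ x : E, ⟪c, x₁ - x₀⟫ + (1 / 2) * ⟪x₁ - x₀, A (x₁ - x₀)⟫ + p x₁
      ≤ ⟪c, x - x₀⟫ + (1 / 2) * ⟪x - x₀, A (x - x₀)⟫ + p x) :
    p x₁ + ⟪c, x₁ - x₀⟫ + ⟪x₁ - x₀, A (x₁ - x₀)⟫ ≤ p x₀ := by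
  set d := x₁ - x₀
  suffices h : (⟪c, d⟫ + p x₁ - p x₀) + ⟪d, A d⟫ ≤ 0 by linarith
  refine add_le_zero_of_forall_mem_Ioc fun t ⟨ht0, ht1⟩ => ?_
  have hseg : (x₀ + (1 - t) • d) - x₀ = (1 - t) • d := add_sub_cancel_left _ _
  have hconv : p (x₀ + (1 - t) • d) ≤ t * p x₀ + (1 - t) * p x₁ := by
    have hcomb : x₀ + (1 - t) • d = t • x₀ + (1 - t) • x₁ := by module
    rw [hcomb]
    exact hp.2 (Set.mem_univ _) (Set.mem_univ _) ht0.le (by linarith) (by ring)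
  have hval := hmin (x₀ + (1 - t) • d)
  rw [hseg, inner_smul_map_smul, real_inner_smul_right] at hval
  have hscaled : t * ((⟪c, d⟫ + p x₁ - p x₀) + (1 - t / 2) * ⟪d, A d⟫) ≤ t * 0 := by
    nlinarith
  exact le_of_mul_le_mul_left hscaled ht0

end

theorem majorized_iPDC_decrease_general {E : Type*} [NormedAddCommGroup E] [InnerProductSpace ℝ E]
    (g p q : E → ℝ) (g' : E → E) (G T : E →ₗ[ℝ] E)
    (hmaj : ∀ x x' : E, g x ≤ g x' + ⟪g' x', x - x'⟫ + (1 / 2) * ⟪x - x', G (x - x')⟫)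
    (hpconv : ConvexOn ℝ Set.univ p)
    (xk xk1 ξ : E)
    (hξ : ∀ x : E, q xk + ⟪x - xk, ξ⟫ ≤ q x)
    (hmin : ∀ x : E,
      g xk + ⟪g' xk, xk1 - xk⟫ + (1 / 2) * ⟪xk1 - xk, G (xk1 - xk)⟫ + p xk1
          - (q xk + ⟪xk1 - xk, ξ⟫) + (1 / 2) * ⟪xk1 - xk, T (xk1 - xk)⟫
        ≤ g xk + ⟪g' xk, x - xk⟫ + (1 / 2) * ⟪x - xk, G (x - xk)⟫ + p x
          - (q xk + ⟪x - xk, ξ⟫) + (1 / 2) * ⟪x - xk, T (x - xk)⟫) :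
    g xk1 + p xk1 - q xk1
      ≤ g xk + p xk - q xk
        - (1 / 2) * (⟪xk1 - xk, G (xk1 - xk)⟫ + 2 * ⟪xk1 - xk, T (xk1 - xk)⟫) := by
  have hopt := hpconv.le_of_forall_quadratic_add_le (G + T) (g' xk - ξ) xk xk1 fun x => by
    have := hmin x
    simp only [LinearMap.add_apply, inner_add_right, inner_sub_left (g' xk) ξ,
      real_inner_comm _ ξ] at this ⊢
    linarith
  simp only [LinearMap.add_apply, inner_add_right, inner_sub_left (g' xk) ξ,
    real_inner_comm _ ξ] at hopt
  linarith [hmaj xk1 xk, hξ xk1]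

/-- sufficient-decrease property of the majorized
indefinite-proximal DC step: `θ(x^{k+1}) ≤ θ(x^k) − (1/2)‖x^{k+1} − x^k‖²_{G+2T}`. -/
theorem majorized_iPDC_decrease {E : Type*} [NormedAddCommGroup E] [InnerProductSpace ℝ E]
    [FiniteDimensional ℝ E]
    (g p q : E → ℝ) (g' : E → E) (G T : E →ₗ[ℝ] E)
    (hGsym : ∀ x y : E, ⟪G x, y⟫ = ⟪x, G y⟫) (hTsym : ∀ x y : E, ⟪T x, y⟫ = ⟪x, T y⟫)
    (hGpsd : ∀ x : E, 0 ≤ ⟪x, G x⟫)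
    (hmaj : ∀ x x' : E, g x ≤ g x' + ⟪g' x', x - x'⟫ + (1 / 2) * ⟪x - x', G (x - x')⟫)
    (hpconv : ConvexOn ℝ Set.univ p) (hqconv : ConvexOn ℝ Set.univ q)
    (xk xk1 ξ : E)
    (hξ : ∀ x : E, q xk + ⟪x - xk, ξ⟫ ≤ q x)
    (hmin : ∀ x : E,
      g xk + ⟪g' xk, xk1 - xk⟫ + (1 / 2) * ⟪xk1 - xk, G (xk1 - xk)⟫ + p xk1
          - (q xk + ⟪xk1 - xk, ξ⟫) + (1 / 2) * ⟪xk1 - xk, T (xk1 - xk)⟫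
        ≤ g xk + ⟪g' xk, x - xk⟫ + (1 / 2) * ⟪x - xk, G (x - xk)⟫ + p x
          - (q xk + ⟪x - xk, ξ⟫) + (1 / 2) * ⟪x - xk, T (x - xk)⟫) :
    g xk1 + p xk1 - q xk1
      ≤ g xk + p xk - q xk
        - (1 / 2) * (⟪xk1 - xk, G (xk1 - xk)⟫ + 2 * ⟪xk1 - xk, T (xk1 - xk)⟫) :=
  majorized_iPDC_decrease_general g p q g' G T hmaj hpconv xk xk1 ξ hξ hmin
end

section
/- In the majorized iPDC algorithm with G + 2T ≻ 0 (positive definite) and inf_x θ(x) > −∞, the successive differences vanish: lim_{k→∞} ‖x^{k+1} − x^k‖ = 0. Moreover, with stopping tolerance η > 0, the algorithm terminates (i.e., ‖x^{k+1} − x^k‖ ≤ η occurs) within ⌈2(θ(x⁰) − θ*)/(λ_min η²)⌉ + 1 iterations, where λ_min > 0 is the smallest eigenvalue of G + 2T and θ* = inf θ. -/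
/-! Telescoping the sufficient-decrease inequality gives
`(λ_min / 2) ∑ₖ ‖x^{k+1} − x^k‖² ≤ θ(x⁰) − θ*`, so the squared steps are summable, and
`N + 1` consecutive steps all longer than `η` would exceed this budget once
`N ≥ 2(θ(x⁰) − θ*)/(λ_min η²)`. -/

open scoped RealInnerProductSpace
open Filter Finset Topology

theorem sum_range_le_sub_of_le_sub_succ {u a : ℕ → ℝ} {m : ℝ}
    (h : ∀ k, a k ≤ u k - u (k + 1)) (hm : ∀ k, m ≤ u k) (n : ℕ) :
    ∑ k ∈ range n, a k ≤ u 0 - m :=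
  calc ∑ k ∈ range n, a k ≤ ∑ k ∈ range n, (u k - u (k + 1)) := sum_le_sum fun k _ => h k
    _ = u 0 - u n := sum_range_sub' u n
    _ ≤ u 0 - m := by linarith [hm n]

theorem tendsto_zero_of_sum_range_sq_le {d : ℕ → ℝ} {B : ℝ} (hd : ∀ k, 0 ≤ d k)
    (hsum : ∀ n, ∑ k ∈ range n, d k ^ 2 ≤ B) : Tendsto d atTop (𝓝 0) := by
  have hsq : Tendsto (fun k => d k ^ 2) atTop (𝓝 0) :=
    (summable_of_sum_range_le (fun k => sq_nonneg (d k)) hsum).tendsto_atTop_zero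
  simpa only [Real.sqrt_sq (hd _), Real.sqrt_zero] using hsq.sqrt

theorem exists_le_ceil_le_of_sum_range_sq_le {d : ℕ → ℝ} {B η : ℝ} (hη : 0 < η)
    (hsum : ∀ n, ∑ k ∈ range n, d k ^ 2 ≤ B) : ∃ k ≤ ⌈B / η ^ 2⌉₊, d k ≤ η := by
  by_contra! hlarge
  set N := ⌈B / η ^ 2⌉₊
  have hlt : ((N : ℝ) + 1) * η ^ 2 < B :=
    calc ((N : ℝ) + 1) * η ^ 2 = ∑ _k ∈ range (N + 1), η ^ 2 := by simp
      _ < ∑ k ∈ range (N + 1), d k ^ 2 :=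
        sum_lt_sum_of_nonempty nonempty_range_add_one fun k hk =>
          pow_lt_pow_left₀ (hlarge k (Nat.lt_succ_iff.mp (mem_range.mp hk))) hη.le two_ne_zero
      _ ≤ B := hsum (N + 1)
  have hceil : B ≤ N * η ^ 2 := (div_le_iff₀ (by positivity)).mp (Nat.le_ceil _)
  nlinarith

theorem sum_range_norm_sub_sq_le {E : Type*} [NormedAddCommGroup E] [InnerProductSpace ℝ E]
    (θ : E → ℝ) (x : ℕ → E) (G T : E →ₗ[ℝ] E) (lammin θstar : ℝ)
    (hlam : 0 < lammin)
    (hpd : ∀ y : E, lammin * ‖y‖ ^ 2 ≤ ⟪y, G y⟫ + 2 * ⟪y, T y⟫)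
    (hdec : ∀ k : ℕ, θ (x (k + 1)) ≤ θ (x k)
      - (1 / 2) * (⟪x (k + 1) - x k, G (x (k + 1) - x k)⟫
        + 2 * ⟪x (k + 1) - x k, T (x (k + 1) - x k)⟫))
    (hbound : ∀ y : E, θstar ≤ θ y) (n : ℕ) :
    ∑ k ∈ range n, ‖x (k + 1) - x k‖ ^ 2 ≤ 2 * (θ (x 0) - θstar) / lammin := by
  have hstep : ∀ k, lammin / 2 * ‖x (k + 1) - x k‖ ^ 2 ≤ θ (x k) - θ (x (k + 1)) := fun k => by
    linarith [hpd (x (k + 1) - x k), hdec k]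
  have := sum_range_le_sub_of_le_sub_succ hstep (fun k => hbound (x k)) n
  rw [← mul_sum] at this
  rw [le_div_iff₀ hlam]
  linarith

theorem majorized_iPDC_termination_general {E : Type*} [NormedAddCommGroup E]
    [InnerProductSpace ℝ E]
    (θ : E → ℝ) (x : ℕ → E) (G T : E →ₗ[ℝ] E) (lammin θstar : ℝ)
    (hlam : 0 < lammin)
    (hpd : ∀ y : E, lammin * ‖y‖ ^ 2 ≤ ⟪y, G y⟫ + 2 * ⟪y, T y⟫)
    (hdec : ∀ k : ℕ, θ (x (k + 1)) ≤ θ (x k)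
      - (1 / 2) * (⟪x (k + 1) - x k, G (x (k + 1) - x k)⟫
        + 2 * ⟪x (k + 1) - x k, T (x (k + 1) - x k)⟫))
    (hbound : ∀ y : E, θstar ≤ θ y) :
    Filter.Tendsto (fun k => ‖x (k + 1) - x k‖) Filter.atTop (nhds 0) ∧
    ∀ η : ℝ, 0 < η →
      ∃ k ≤ Nat.ceil (2 * (θ (x 0) - θstar) / (lammin * η ^ 2)) + 1,
        ‖x (k + 1) - x k‖ ≤ η := by
  have hsum := sum_range_norm_sub_sq_le θ x G T lammin θstar hlam hpd hdec hbound
  refine ⟨tendsto_zero_of_sum_range_sq_le (fun k => norm_nonneg _) hsum, fun η hη => ?_⟩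
  obtain ⟨k, hk, hkη⟩ := exists_le_ceil_le_of_sum_range_sq_le hη hsum
  rw [div_div] at hk
  exact ⟨k, hk.trans (Nat.le_succ _), hkη⟩

/-- under the per-iteration decrease
`θ(x^{k+1}) ≤ θ(x^k) − (1/2)‖x^{k+1} − x^k‖²_{G+2T}` with `G + 2T ≻ 0`
(smallest eigenvalue `λ_min > 0`) and `inf θ ≥ θ*`, the successive differences
tend to zero, and for any tolerance `η > 0` the stopping criterion
`‖x^{k+1} − x^k‖ ≤ η` occurs within `⌈2(θ(x⁰) − θ*)/(λ_min η²)⌉ + 1` iterations. -/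
theorem majorized_iPDC_termination {E : Type*} [NormedAddCommGroup E]
    [InnerProductSpace ℝ E] [FiniteDimensional ℝ E]
    (θ : E → ℝ) (x : ℕ → E) (G T : E →ₗ[ℝ] E) (lammin θstar : ℝ)
    (hlam : 0 < lammin)
    (hpd : ∀ y : E, lammin * ‖y‖ ^ 2 ≤ ⟪y, G y⟫ + 2 * ⟪y, T y⟫)
    (hdec : ∀ k : ℕ, θ (x (k + 1)) ≤ θ (x k)
      - (1 / 2) * (⟪x (k + 1) - x k, G (x (k + 1) - x k)⟫
        + 2 * ⟪x (k + 1) - x k, T (x (k + 1) - x k)⟫))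
    (hbound : ∀ y : E, θstar ≤ θ y) :
    Filter.Tendsto (fun k => ‖x (k + 1) - x k‖) Filter.atTop (nhds 0) ∧
    ∀ η : ℝ, 0 < η →
      ∃ k ≤ Nat.ceil (2 * (θ (x 0) - θstar) / (lammin * η ^ 2)) + 1,
        ‖x (k + 1) - x k‖ ≤ η :=
  majorized_iPDC_termination_general θ x G T lammin θstar hlam hpd hdec hbound
end
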